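/- Type 1 explicitness theorem: suppose ⟨P, f⟩ is a Type 1 policy for subject domain V (P a partition of T_V, f assigning an equivalence relation f X on V to each block X ∈ P), S ∈ Sys(V), A an equivalence relation on T, and o ∈ {U, L, EM, CA, WA}. If for every X ∈ P, S∩X has subject domain V and ⟦f X⟧ ≤_o K(S∩X, A), then ⟦⋀_{X∈P} f X⟧ ≤_o K(S, A), where ⋀ denotes the meet (intersection) of equivalence relations. -/

import Mathlib

/-!
Every class of the meet `⋂ X ∈ P, f X` lies in the class of the same point under each `f X`, and
every observation of `S ∩ X` lies in an observation of `S`. Conversely, an observation of `S`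
through a trace `t` contains the observation of `S ∩ X` through `t`, where `X` is the block of `P`
containing `t`. The orders `U` and `CA` transfer through the block of the relevant trace; `L` and
`WA` through any single block, which exists since `P` is nonempty.
-/

open Set

section Defs

variable {α : Type*}

/-- A K-space over `W`: a collection of nonempty subsets of `W` covering `W`. -/
def Covers (K : Set (Set α)) (W : Set α) : Prop :=
  (∀ X ∈ K, X.Nonempty) ∧ ⋃₀ K = W

/-- A partition of `W`: a K-space whose members are pairwise disjoint. -/
def IsPart (K : Set (Set α)) (W : Set α) : Prop :=
  Covers K W ∧ ∀ X ∈ K, ∀ Y ∈ K, X ≠ Y → X ∩ Y = ∅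

/-- Upper (Smyth) ordering. -/
def leU (K₁ K₂ : Set (Set α)) : Prop := ∀ X₂ ∈ K₂, ∃ X₁ ∈ K₁, X₁ ⊆ X₂

/-- Lower (Hoare) ordering. -/
def leL (K₁ K₂ : Set (Set α)) : Prop := ∀ X₁ ∈ K₁, ∃ X₂ ∈ K₂, X₁ ⊆ X₂

/-- Egli-Milner ordering. -/
def leEM (K₁ K₂ : Set (Set α)) : Prop := leU K₁ K₂ ∧ leL K₁ K₂

/-- `P₁` refines `P₂`: every block of `P₁` is contained in some block of `P₂`. -/
def Refines (P₁ P₂ : Set (Set α)) : Prop := ∀ X₁ ∈ P₁, ∃ X₂ ∈ P₂, X₁ ⊆ X₂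

/-- `X` answers query `Q` relative to universe `U`. -/
def Answers (U X Q : Set α) : Prop := X ⊆ Q ∨ X ⊆ U \ Q

def CanAnswer (U : Set α) (K : Set (Set α)) (Q : Set α) : Prop := ∃ X ∈ K, Answers U X Q

def WillAnswer (U : Set α) (K : Set (Set α)) (Q : Set α) : Prop := ∀ X ∈ K, Answers U X Q

/-- Can-answer ordering relative to universe `U`. -/
def leCA (U : Set α) (K₁ K₂ : Set (Set α)) : Prop :=
  ∀ Q ⊆ U, CanAnswer U K₂ Q → CanAnswer U K₁ Q

/-- Will-answer ordering relative to universe `U`. -/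
def leWA (U : Set α) (K₁ K₂ : Set (Set α)) : Prop :=
  ∀ Q ⊆ U, WillAnswer U K₂ Q → WillAnswer U K₁ Q

/-- `K` can confirm fact `F`. -/
def CanConfirm (K : Set (Set α)) (F : Set α) : Prop := ∃ X ∈ K, X ⊆ F

/-- `K` can have uncertainty `F`. -/
def HasUncertainty (K : Set (Set α)) (F : Set α) : Prop := ∃ X ∈ K, F ⊆ X

/-- The observation (equivalence class of attacker `A`) containing trace `t`. -/
def obsClass {T : Type*} (A : Setoid T) (t : T) : Set T := {u | A.r u t}

/-- The K-space of attacker `A` for system `S` with subject function `Φ`: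
knowledge sets `Φ(O ∩ S)` for observations `O` with `O ∩ S ≠ ∅`. -/
def kspace {T D : Type*} (Φ : T → D) (S : Set T) (A : Setoid T) : Set (Set D) :=
  {X | ∃ t ∈ S, X = Φ '' (obsClass A t ∩ S)}

/-- `R` (a set of pairs) is an equivalence relation on the subset `V`. -/
def IsEROn (V : Set α) (R : Set (α × α)) : Prop :=
  R ⊆ V ×ˢ V ∧ (∀ v ∈ V, (v, v) ∈ R) ∧ (∀ x y, (x, y) ∈ R → (y, x) ∈ R) ∧
    (∀ x y z, (x, y) ∈ R → (y, z) ∈ R → (x, z) ∈ R)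

/-- The equivalence class of `v` under the relation-as-set-of-pairs `R`. -/
def classOf (R : Set (α × α)) (v : α) : Set α := {u | (u, v) ∈ R}

/-- The partition `⟦R⟧` of `V` corresponding to an equivalence relation `R` on `V`. -/
def classPart (V : Set α) (R : Set (α × α)) : Set (Set α) :=
  {C | ∃ v ∈ V, C = classOf R v}

end Defs

section Orders

variable {α : Type*}

theorem Answers.mono {U X X' Q : Set α} (h : X' ⊆ X) (hX : Answers U X Q) : Answers U X' Q :=
  hX.imp h.trans h.trans

theorem leU.trans {K₁ K₂ K₃ : Set (Set α)} (h₁₂ : leU K₁ K₂) (h₂₃ : leU K₂ K₃) : leU K₁ K₃ := by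
  intro X₃ hX₃
  obtain ⟨X₂, hX₂, h₂⟩ := h₂₃ X₃ hX₃
  obtain ⟨X₁, hX₁, h₁⟩ := h₁₂ X₂ hX₂
  exact ⟨X₁, hX₁, h₁.trans h₂⟩

theorem leL.trans {K₁ K₂ K₃ : Set (Set α)} (h₁₂ : leL K₁ K₂) (h₂₃ : leL K₂ K₃) : leL K₁ K₃ := by
  intro X₁ hX₁
  obtain ⟨X₂, hX₂, h₁⟩ := h₁₂ X₁ hX₁
  obtain ⟨X₃, hX₃, h₂⟩ := h₂₃ X₂ hX₂
  exact ⟨X₃, hX₃, h₁.trans h₂⟩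

theorem leCA.trans {U : Set α} {K₁ K₂ K₃ : Set (Set α)} (h₁₂ : leCA U K₁ K₂)
    (h₂₃ : leCA U K₂ K₃) : leCA U K₁ K₃ :=
  fun Q hQ h => h₁₂ Q hQ (h₂₃ Q hQ h)

theorem leWA.trans {U : Set α} {K₁ K₂ K₃ : Set (Set α)} (h₁₂ : leWA U K₁ K₂)
    (h₂₃ : leWA U K₂ K₃) : leWA U K₁ K₃ :=
  fun Q hQ h => h₁₂ Q hQ (h₂₃ Q hQ h)

theorem leCA_of_leU {U : Set α} {K₁ K₂ : Set (Set α)} (h : leU K₁ K₂) : leCA U K₁ K₂ := by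
  rintro Q - ⟨X₂, hX₂, hans⟩
  obtain ⟨X₁, hX₁, h₁₂⟩ := h X₂ hX₂
  exact ⟨X₁, hX₁, hans.mono h₁₂⟩

theorem leWA_of_leL {U : Set α} {K₁ K₂ : Set (Set α)} (h : leL K₁ K₂) : leWA U K₁ K₂ := by
  intro Q _ hwill X₁ hX₁
  obtain ⟨X₂, hX₂, h₁₂⟩ := h X₁ hX₁
  exact (hwill X₂ hX₂).mono h₁₂

theorem leU_biUnion {ι : Type*} {s : Set ι} {K₁ : Set (Set α)} {K : ι → Set (Set α)}
    (h : ∀ i ∈ s, leU K₁ (K i)) : leU K₁ (⋃ i ∈ s, K i) := by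
  intro X hX
  obtain ⟨i, hi, hXi⟩ := mem_iUnion₂.1 hX
  exact h i hi X hXi

theorem leCA_biUnion {ι : Type*} {s : Set ι} {U : Set α} {K₁ : Set (Set α)}
    {K : ι → Set (Set α)} (h : ∀ i ∈ s, leCA U K₁ (K i)) : leCA U K₁ (⋃ i ∈ s, K i) := by
  rintro Q hQ ⟨X, hX, hans⟩
  obtain ⟨i, hi, hXi⟩ := mem_iUnion₂.1 hX
  exact h i hi Q hQ ⟨X, hXi, hans⟩

section Meet

variable {ι : Type*} {s : Set ι} {V : Set α} {R : ι → Set (α × α)} {i : ι}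

theorem classOf_biInter_subset (hi : i ∈ s) (v : α) :
    classOf (⋂ j ∈ s, R j) v ⊆ classOf (R i) v :=
  fun _ hu => mem_iInter₂.1 hu i hi

theorem leU_classPart_biInter (hi : i ∈ s) :
    leU (classPart V (⋂ j ∈ s, R j)) (classPart V (R i)) := by
  rintro _ ⟨v, hv, rfl⟩
  exact ⟨_, ⟨v, hv, rfl⟩, classOf_biInter_subset hi v⟩

theorem leL_classPart_biInter (hi : i ∈ s) :
    leL (classPart V (⋂ j ∈ s, R j)) (classPart V (R i)) := by
  rintro _ ⟨v, hv, rfl⟩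
  exact ⟨_, ⟨v, hv, rfl⟩, classOf_biInter_subset hi v⟩

end Meet

end Orders

section KSpace

variable {T D : Type*} (Φ : T → D) (A : Setoid T)

theorem leL_kspace_of_subset {S' S : Set T} (h : S' ⊆ S) : leL (kspace Φ S' A) (kspace Φ S A) := by
  rintro _ ⟨t, ht, rfl⟩
  exact ⟨_, ⟨t, h ht, rfl⟩, image_mono (inter_subset_inter_right _ h)⟩

theorem leU_biUnion_kspace_inter {S : Set T} {P : Set (Set T)} (hS : S ⊆ ⋃₀ P) :
    leU (⋃ X ∈ P, kspace Φ (S ∩ X) A) (kspace Φ S A) := by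
  rintro _ ⟨t, ht, rfl⟩
  obtain ⟨X, hX, htX⟩ := hS ht
  exact ⟨_, mem_iUnion₂.2 ⟨X, hX, t, ⟨ht, htX⟩, rfl⟩,
    image_mono (inter_subset_inter_right _ inter_subset_left)⟩

end KSpace

theorem stmt17_general {T D : Type*} (Φ : T → D) (V : Set D) (A : Setoid T) (S : Set T)
    (hS : S ⊆ Φ ⁻¹' V ∧ Φ '' S = V)
    (P : Set (Set T)) (hP : IsPart P (Φ ⁻¹' V)) (hPne : P.Nonempty)
    (f : Set T → Set (D × D))
    (le : Set D → Set (Set D) → Set (Set D) → Prop)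
    (hle : le ∈ ({fun _ => leU, fun _ => leL, fun _ => leEM, leCA, leWA} :
      Set (Set D → Set (Set D) → Set (Set D) → Prop)))
    (hsat : ∀ X ∈ P, (S ∩ X ⊆ Φ ⁻¹' V ∧ Φ '' (S ∩ X) = V) ∧
      le V (classPart V (f X)) (kspace Φ (S ∩ X) A)) :
    le V (classPart V (⋂ X ∈ P, f X)) (kspace Φ S A) := by
  obtain ⟨X₀, hX₀⟩ := hPne
  have hcover : leU (⋃ X ∈ P, kspace Φ (S ∩ X) A) (kspace Φ S A) :=
    leU_biUnion_kspace_inter Φ A (hP.1.2 ▸ hS.1)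
  have hsub : leL (kspace Φ (S ∩ X₀) A) (kspace Φ S A) := leL_kspace_of_subset Φ A inter_subset_left
  simp only [mem_insert_iff, mem_singleton_iff] at hle
  rcases hle with rfl | rfl | rfl | rfl | rfl
  · exact (leU_biUnion fun X hX => (leU_classPart_biInter hX).trans (hsat X hX).2).trans hcover
  · exact ((leL_classPart_biInter hX₀).trans (hsat X₀ hX₀).2).trans hsub
  · exact ⟨(leU_biUnion fun X hX => (leU_classPart_biInter hX).trans (hsat X hX).2.1).trans hcover,
      ((leL_classPart_biInter hX₀).trans (hsat X₀ hX₀).2.2).trans hsub⟩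
  · exact (leCA_biUnion fun X hX =>
      (leCA_of_leU (leU_classPart_biInter hX)).trans (hsat X hX).2).trans (leCA_of_leU hcover)
  · exact ((leWA_of_leL (leL_classPart_biInter hX₀)).trans (hsat X₀ hX₀).2).trans
      (leWA_of_leL hsub)

/-- Type 1 explicitness: if `S` satisfies the Type 1 policy `⟨P, f⟩`
w.r.t. attacker `A` and order `o ∈ {U, L, EM, CA, WA}`, then
`⟦⋀_{X∈P} f X⟧ ≤_o K(S, A)`. -/
theorem stmt17 {T D : Type*} (Φ : T → D) (V : Set D) (A : Setoid T) (S : Set T)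
    (hS : S ⊆ Φ ⁻¹' V ∧ Φ '' S = V)
    (P : Set (Set T)) (hP : IsPart P (Φ ⁻¹' V)) (hPne : P.Nonempty)
    (htotal : ∀ X ∈ P, Φ '' X = V)
    (f : Set T → Set (D × D)) (hf : ∀ X ∈ P, IsEROn V (f X))
    (le : Set D → Set (Set D) → Set (Set D) → Prop)
    (hle : le ∈ ({fun _ => leU, fun _ => leL, fun _ => leEM, leCA, leWA} :
      Set (Set D → Set (Set D) → Set (Set D) → Prop)))
    (hsat : ∀ X ∈ P, (S ∩ X ⊆ Φ ⁻¹' V ∧ Φ '' (S ∩ X) = V) ∧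
      le V (classPart V (f X)) (kspace Φ (S ∩ X) A)) :
    le V (classPart V (⋂ X ∈ P, f X)) (kspace Φ S A) :=
  stmt17_general Φ V A S hS P hP hPne f le hle hsat
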